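/- arXiv:1006.4955 — 2 statements merged into one kernel-verified Lean document; each statement's English description precedes it below -/
import Mathlib

section
/- Consider ground terms of combinatory logic over the single constant O with the Owl rule @(@(O,x),y) → @(y,@(x,y)) (O x y → y (x y)). Define a partial interpretation into A = {0,1} by [[O]] = 0, [[@]](0,0) = 1, [[@]](0,1) = 1, [[@]](1,0) = 1, and [[@]](1,1) undefined, extended to ground terms by partial evaluation. Then a ground term t is strongly normalizing with respect to the Owl rule if and only if [[t]] is defined. -/
/-! On defined terms a step preserves definedness and strictly decreases the weight
`|O| = 1`, `|s t| = 2|s| + |t|`: a defined redex `O x y` forces `[[y]] = 0`, i.e. `y = O`,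
and `O x O → O (x O)` loses weight 2. Conversely an undefined term has an undefined reduct:
it contains an undefined application `s u` of defined terms, so `s ≠ O ≠ u`, and a defined
term `s ≠ O` is either `O x` or reduces to a defined term; in both cases `s u` reduces to an
application of two terms different from `O`, which is again undefined. -/

namespace Owl2

/-- Ground terms of combinatory logic over a set `C` of constants. -/
inductive CL (C : Type) : Type
  | const : C → CL C
  | app : CL C → CL C → CL C

/-- One-step rewriting with the Owl rule `O x y → y (x y)` (the only constant
is `O`). -/
inductive ORw : CL Unit → CL Unit → Prop
  | root (x y : CL Unit) :
      ORw (.app (.app (.const ()) x) y) (.app y (.app x y))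
  | appl {s t : CL Unit} (u : CL Unit) : ORw s t → ORw (.app s u) (.app t u)
  | appr (u : CL Unit) {s t : CL Unit} : ORw s t → ORw (.app u s) (.app u t)

/-- The partial interpretation of application on `A = {0,1}`:
`(0,0) ↦ 1`, `(0,1) ↦ 1`, `(1,0) ↦ 1`, `(1,1)` undefined. -/
def appI : Fin 2 → Fin 2 → Option (Fin 2) := fun a b =>
  if a = 0 then some 1 else if b = 0 then some 1 else none

/-- Partial evaluation of ground terms: `[[O]] = 0` and
`[[@(t₁,t₂)]] ≃ appI [[t₁]] [[t₂]]`. -/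
def evalO : CL Unit → Option (Fin 2)
  | .const _ => some 0
  | .app t u => (evalO t).bind fun a => (evalO u).bind fun b => appI a b

section Chains

variable {α : Type*}

def InfiniteChain (r : α → α → Prop) (a : α) : Prop :=
  ∃ f : ℕ → α, f 0 = a ∧ ∀ k, r (f k) (f (k + 1))

theorem not_infiniteChain_of_measure {r : α → α → Prop} (P : α → Prop) (μ : α → ℕ)
    (hstep : ∀ a b, r a b → P a → P b ∧ μ b < μ a) {a : α} (ha : P a) :
    ¬ InfiniteChain r a := by
  induction a using (measure μ).wf.induction with
  | _ a ih =>
    rintro ⟨f, rfl, hf⟩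
    obtain ⟨hP, hlt⟩ := hstep _ _ (hf 0) ha
    exact ih (f 1) hlt hP ⟨fun k => f (k + 1), rfl, fun k => hf (k + 1)⟩

theorem infiniteChain_of_forall_exists {r : α → α → Prop} (P : α → Prop)
    (hstep : ∀ a, P a → ∃ b, r a b ∧ P b) {a : α} (ha : P a) : InfiniteChain r a := by
  choose next hnext using hstep
  let g : {a // P a} → {a // P a} := fun b => ⟨next b.1 b.2, (hnext b.1 b.2).2⟩
  refine ⟨fun k => (g^[k] ⟨a, ha⟩).1, rfl, fun k => ?_⟩
  dsimp only
  rw [Function.iterate_succ_apply']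
  exact (hnext _ _).1

end Chains

local notation "O" => CL.const ()

theorem evalO_eq_some_zero_iff {t : CL Unit} : evalO t = some 0 ↔ t = O := by
  cases t with
  | const => simp [evalO]
  | app s u =>
    have hne : ∀ a b, appI a b ≠ some 0 := by decide
    cases hs : evalO s <;> cases hu : evalO u <;> simp [evalO, hs, hu, hne]

theorem isSome_evalO_app {s u : CL Unit} :
    (evalO (.app s u)).isSome ↔ (evalO s).isSome ∧ (evalO u).isSome ∧ (s = O ∨ u = O) := by
  have happI : ∀ a b, (appI a b).isSome ↔ a = 0 ∨ b = 0 := by decide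
  cases hs : evalO s <;> cases hu : evalO u <;>
    simp [evalO, hs, hu, happI, ← evalO_eq_some_zero_iff]

theorem ORw.ne_const {s t : CL Unit} (h : ORw s t) : t ≠ O := by
  cases h <;> nofun

def weight : CL Unit → ℕ
  | .const _ => 1
  | .app s t => 2 * weight s + weight t

theorem ORw.isSome_evalO_and_weight_lt {s t : CL Unit} (h : ORw s t) (hs : (evalO s).isSome) :
    (evalO t).isSome ∧ weight t < weight s := by
  induction h with
  | root x y =>
    obtain ⟨hOx, hy, hxy⟩ := isSome_evalO_app.1 hs
    obtain ⟨hO, hx, -⟩ := isSome_evalO_app.1 hOx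
    obtain rfl : y = O := by simpa using hxy
    refine ⟨isSome_evalO_app.2 ⟨hO, isSome_evalO_app.2 ⟨hx, hO, .inr rfl⟩, .inl rfl⟩, ?_⟩
    simp only [weight]
    omega
  | appl u h ih =>
    obtain ⟨hs, hu, hsu⟩ := isSome_evalO_app.1 hs
    obtain ⟨hs', hlt⟩ := ih hs
    refine ⟨isSome_evalO_app.2 ⟨hs', hu, .inr (hsu.resolve_left ?_)⟩, ?_⟩
    · rintro rfl; cases h
    · simp only [weight]; omega
  | appr u h ih =>
    obtain ⟨hu, hs, hus⟩ := isSome_evalO_app.1 hs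
    obtain ⟨hs', hlt⟩ := ih hs
    refine ⟨isSome_evalO_app.2 ⟨hu, hs', .inl (hus.resolve_right ?_)⟩, ?_⟩
    · rintro rfl; cases h
    · simp only [weight]; omega

theorem exists_step_of_isSome_evalO {s : CL Unit} (hs : (evalO s).isSome) (hO : s ≠ O) :
    (∃ x, s = .app O x) ∨ ∃ s', ORw s s' ∧ (evalO s').isSome := by
  induction s with
  | const => exact absurd rfl hO
  | app a b iha _ =>
    obtain ⟨ha, -, hab⟩ := isSome_evalO_app.1 hs
    by_cases haO : a = O
    · exact .inl ⟨b, haO ▸ rfl⟩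
    obtain rfl : b = O := hab.resolve_left haO
    right
    rcases iha ha haO with ⟨x, rfl⟩ | ⟨a', hstep, ha'⟩
    · have hx := (isSome_evalO_app.1 ha).2.1
      exact ⟨_, .root x O, isSome_evalO_app.2 ⟨rfl, isSome_evalO_app.2 ⟨hx, rfl, .inr rfl⟩, .inl rfl⟩⟩
    · exact ⟨_, .appl O hstep, isSome_evalO_app.2 ⟨ha', rfl, .inr rfl⟩⟩

theorem exists_step_of_not_isSome_evalO {t : CL Unit} (ht : ¬ (evalO t).isSome) :
    ∃ t', ORw t t' ∧ ¬ (evalO t').isSome := by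
  induction t with
  | const => simp [evalO] at ht
  | app s u ihs ihu =>
    by_cases hs : (evalO s).isSome
    swap
    · obtain ⟨s', hstep, hs'⟩ := ihs hs
      exact ⟨_, .appl u hstep, fun h => hs' (isSome_evalO_app.1 h).1⟩
    by_cases hu : (evalO u).isSome
    swap
    · obtain ⟨u', hstep, hu'⟩ := ihu hu
      exact ⟨_, .appr s hstep, fun h => hu' (isSome_evalO_app.1 h).2.1⟩
    obtain ⟨hsO, huO⟩ : s ≠ O ∧ u ≠ O := by simpa [isSome_evalO_app, hs, hu] using ht
    rcases exists_step_of_isSome_evalO hs hsO with ⟨x, rfl⟩ | ⟨s', hstep, -⟩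
    · refine ⟨_, .root x u, fun h => ?_⟩
      simp [isSome_evalO_app, huO] at h
    · refine ⟨_, .appl u hstep, fun h => ?_⟩
      simp [isSome_evalO_app, huO, hstep.ne_const] at h

/-- A ground `O`-term is strongly normalizing with respect
to the Owl rule iff its interpretation is defined. -/
theorem owl_SN_iff_defined :
    ∀ t : CL Unit,
      (¬ ∃ f : ℕ → CL Unit, f 0 = t ∧ ∀ k : ℕ, ORw (f k) (f (k + 1))) ↔
        (evalO t).isSome := by
  intro t
  refine ⟨fun hSN => ?_, fun hdef => ?_⟩
  · by_contra hundef
    exact hSN (infiniteChain_of_forall_exists _ (fun _ => exists_step_of_not_isSome_evalO) hundef)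
  · exact not_infiniteChain_of_measure _ weight (fun _ _ => ORw.isSome_evalO_and_weight_lt) hdef

end Owl2
end

section
/- Consider the TRS R = {a(b(x)) → x, c(c(d)) → c(c(d))} over the signature with unary symbols a, b, c and constant d, and let N be the set of strongly normalizing ground terms of R. Then: (i) for every n ∈ ℕ the term c(aⁿ(bⁿ(c(d)))) is non-terminating; (ii) for all n, m ∈ ℕ with n ≠ m the term c(aⁿ(bᵐ(c(d)))) is terminating; and consequently (iii) the terms bⁿ(c(d)) for n ∈ ℕ are pairwise non-equivalent under the Nerode congruence ~_N, so ~_N has infinitely many equivalence classes. -/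
namespace ABCD

/-- Ground terms over the signature with unary `a`, `b`, `c` and constant `d`. -/
inductive T4 : Type
  | d : T4
  | a : T4 → T4
  | b : T4 → T4
  | c : T4 → T4

open T4

/-- One-step rewriting with the rules `a(b(x)) → x` and
`c(c(d)) → c(c(d))`, closed under contexts. -/
inductive R4 : T4 → T4 → Prop
  | ab (x : T4) : R4 (a (b x)) x
  | ccd : R4 (c (c d)) (c (c d))
  | a_c {u v : T4} : R4 u v → R4 (a u) (a v)
  | b_c {u v : T4} : R4 u v → R4 (b u) (b v)
  | c_c {u v : T4} : R4 u v → R4 (c u) (c v)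

/-- Strong normalisation (termination) of a ground term. -/
def SN4 (t : T4) : Prop :=
  ¬ ∃ f : ℕ → T4, f 0 = t ∧ ∀ n : ℕ, R4 (f n) (f (n + 1))

/-- Ground one-hole contexts (all symbols are unary): strings of unary
symbols around the hole. -/
inductive Ctx4 : Type
  | hole : Ctx4
  | a : Ctx4 → Ctx4
  | b : Ctx4 → Ctx4
  | c : Ctx4 → Ctx4

/-- Plugging a term into a context. -/
def plug4 : Ctx4 → T4 → T4
  | .hole, t => t
  | .a C, t => a (plug4 C t)
  | .b C, t => b (plug4 C t)
  | .c C, t => c (plug4 C t)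

/-- The Nerode congruence with respect to the set `N` of strongly
normalizing ground terms. -/
def Ner4 (t1 t2 : T4) : Prop :=
  ∀ C : Ctx4, (SN4 (plug4 C t1) ↔ SN4 (plug4 C t2))

/-!
Inside `c(aⁿ(bᵐ(c(d))))` the only redex other than `c(c(d))` is the innermost `a(b(·))`, so every
step lowers `n` and `m` by one together. Hence the looping redex `c(c(d))` is reached exactly when
`n = m`, and the context `c(aⁿ(□))` separates `bⁿ(c(d))` from `bᵐ(c(d))` for `m ≠ n`.
-/

theorem R4.iterate_a {u v : T4} (h : R4 u v) : ∀ i, R4 (a^[i] u) (a^[i] v)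
  | 0 => h
  | i + 1 => by simpa only [Function.iterate_succ_apply'] using (h.iterate_a i).a_c

theorem R4.iterate_ab (i : ℕ) (x : T4) : R4 (a^[i + 1] (b^[i + 1] x)) (a^[i] (b^[i] x)) := by
  rw [Function.iterate_succ_apply a, Function.iterate_succ_apply' b]
  exact (R4.ab _).iterate_a i

theorem not_R4_iterate_b_cd (m : ℕ) (v : T4) : ¬ R4 (b^[m] (c d)) v := by
  induction m generalizing v with
  | zero => rintro (_ | _ | _ | _ | ⟨⟨⟩⟩)
  | succ m ih =>
    rw [Function.iterate_succ_apply']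
    rintro (_ | _ | _ | h | _)
    exact ih _ h

theorem iterate_ab_cd_eq_cd {n m : ℕ} (h : a^[n] (b^[m] (c d)) = c d) : n = 0 ∧ m = 0 := by
  rcases n with _ | n <;> rcases m with _ | m <;> simp_all [Function.iterate_succ_apply']

theorem R4_iterate_ab_cd {n m : ℕ} {v : T4} (h : R4 (a^[n] (b^[m] (c d))) v) :
    ∃ n' m', n = n' + 1 ∧ m = m' + 1 ∧ v = a^[n'] (b^[m'] (c d)) := by
  induction n generalizing v with
  | zero => exact absurd h (not_R4_iterate_b_cd m v)
  | succ n ih =>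
    rw [Function.iterate_succ_apply'] at h
    generalize hw : a^[n] (b^[m] (c d)) = w at h
    cases h with
    | ab x =>
      rcases n with _ | n <;> rcases m with _ | m <;>
        simp_all [Function.iterate_succ_apply']
    | a_c h =>
      subst hw
      obtain ⟨n', m', rfl, rfl, rfl⟩ := ih h
      exact ⟨n' + 1, m', rfl, rfl, (Function.iterate_succ_apply' a n' _).symm⟩

theorem R4_c_iterate_ab_cd {n m : ℕ} {v : T4} (h : R4 (c (a^[n] (b^[m] (c d)))) v) :
    (n = 0 ∧ m = 0) ∨ ∃ n' m', n = n' + 1 ∧ m = m' + 1 ∧ v = c (a^[n'] (b^[m'] (c d))) := by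
  generalize hw : a^[n] (b^[m] (c d)) = w at h
  cases h with
  | ccd => exact .inl (iterate_ab_cd_eq_cd hw)
  | c_c h =>
    subst hw
    obtain ⟨n', m', rfl, rfl, rfl⟩ := R4_iterate_ab_cd h
    exact .inr ⟨n', m', rfl, rfl, rfl⟩

theorem SN4.of_forall_R4 {t : T4} (h : ∀ v, R4 t v → SN4 v) : SN4 t :=
  fun ⟨f, hf0, hf⟩ => h (f 1) (hf0 ▸ hf 0) ⟨fun i => f (i + 1), rfl, fun i => hf (i + 1)⟩

theorem not_SN4_of_R4 {t v : T4} (h : R4 t v) (hv : ¬ SN4 v) : ¬ SN4 t := by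
  obtain ⟨g, hg0, hg⟩ := not_not.1 hv
  refine fun hsn => hsn ⟨fun | 0 => t | i + 1 => g i, rfl, ?_⟩
  rintro (_ | i)
  · exact (show R4 t (g 0) from hg0 ▸ h)
  · exact hg i

theorem not_SN4_ccd : ¬ SN4 (c (c d)) :=
  not_not.2 ⟨fun _ => c (c d), rfl, fun _ => R4.ccd⟩

theorem not_SN4_c_iterate_ab_cd (n : ℕ) : ¬ SN4 (c (a^[n] (b^[n] (c d)))) := by
  induction n with
  | zero => exact not_SN4_ccd
  | succ n ih => exact not_SN4_of_R4 (R4.iterate_ab n _).c_c ih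

theorem SN4_c_iterate_ab_cd_of_ne {n m : ℕ} (hnm : n ≠ m) : SN4 (c (a^[n] (b^[m] (c d)))) := by
  refine SN4.of_forall_R4 fun v hv => ?_
  rcases R4_c_iterate_ab_cd hv with ⟨rfl, rfl⟩ | ⟨n', m', rfl, rfl, rfl⟩
  · exact absurd rfl hnm
  · exact SN4_c_iterate_ab_cd_of_ne (n := n') (by omega)
termination_by n

theorem plug4_iterate_a (n : ℕ) (C : Ctx4) (t : T4) :
    plug4 (Ctx4.a^[n] C) t = a^[n] (plug4 C t) :=
  (Function.Semiconj.iterate_right (f := (plug4 · t)) (fun _ => rfl) n) C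

/-- (i) `c(aⁿ(bⁿ(c(d))))` is non-terminating for every `n`;
(ii) `c(aⁿ(bᵐ(c(d))))` is terminating whenever `n ≠ m`; (iii) consequently
the terms `bⁿ(c(d))` are pairwise non-equivalent under the Nerode congruence
`~_N`, so `~_N` has infinitely many equivalence classes. -/
theorem nerode_infinitely_many_classes :
    (∀ n : ℕ, ¬ SN4 (c (a^[n] (b^[n] (c d))))) ∧
    (∀ n m : ℕ, n ≠ m → SN4 (c (a^[n] (b^[m] (c d))))) ∧
    (∀ n m : ℕ, n ≠ m → ¬ Ner4 (b^[n] (c d)) (b^[m] (c d))) := by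
  refine ⟨not_SN4_c_iterate_ab_cd, fun _ _ => SN4_c_iterate_ab_cd_of_ne, fun n m hnm hner => ?_⟩
  have h := hner (Ctx4.c (Ctx4.a^[n] Ctx4.hole))
  simp only [plug4, plug4_iterate_a] at h
  exact not_SN4_c_iterate_ab_cd n (h.2 (SN4_c_iterate_ab_cd_of_ne hnm))

end ABCD
end
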